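/- For a Wigner Hermitian matrix M_n with n odd, the expected determinant E[det M_n] equals 0; for n even, E[det M_n] = (-1)^{n/2} · n! / ((n/2)! · 2^{n/2}). -/

import Mathlib

/-
Expanding the determinant, `E[det M] = ∑ σ, sgn σ · E[∏ i, ζ (σ i) i]`. Group the factors of each
product by the position `{σ i, i}` they read: by Hermitian symmetry each group is a function of one
upper-triangular entry, so independence factors the expectation over positions. A position read
once contributes a mean-zero factor, and a position is read twice exactly when it is a 2-cycle of
`σ`, contributing `E|ζ|² = 1`. So the expectation is `1` on fixed-point-free involutions and `0`
otherwise. These involutions are the permutations of cycle type `2^(n/2)`: all have sign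
`(-1)^(n/2)`, none exist for odd `n`, and for even `n` there are `n! / ((n/2)! 2^(n/2))` of them.
-/

open MeasureTheory ProbabilityTheory Finset
open scoped Nat

namespace Equiv.Perm

def IsFixedPointFreeInvolution {α : Type*} (σ : Perm α) : Prop := ∀ x, σ (σ x) = x ∧ σ x ≠ x

variable {α : Type*} [Fintype α] [DecidableEq α]

instance : DecidablePred (IsFixedPointFreeInvolution (α := α)) := fun σ =>
  inferInstanceAs (Decidable (∀ x, σ (σ x) = x ∧ σ x ≠ x))

lemma isFixedPointFreeInvolution_iff {σ : Perm α} :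
    σ.IsFixedPointFreeInvolution ↔ σ ^ 2 = 1 ∧ σ.support = univ := by
  simp [IsFixedPointFreeInvolution, forall_and, Perm.ext_iff, sq, Finset.eq_univ_iff_forall]

lemma IsFixedPointFreeInvolution.two_dvd_card {σ : Perm α} (hσ : σ.IsFixedPointFreeInvolution) :
    2 ∣ Fintype.card α := by
  obtain ⟨h2, hs⟩ := isFixedPointFreeInvolution_iff.1 hσ
  simpa [hs] using two_dvd_card_support h2

lemma cycleType_eq_replicate_two_iff {k : ℕ} (hk : Fintype.card α = 2 * k) {σ : Perm α} :
    σ.cycleType = Multiset.replicate k 2 ↔ σ.IsFixedPointFreeInvolution := by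
  have : Fact (Nat.Prime 2) := ⟨Nat.prime_two⟩
  rw [isFixedPointFreeInvolution_iff, Multiset.eq_replicate, pow_prime_eq_one_iff, and_comm]
  refine and_congr_right fun h2 => ?_
  have hsum : #σ.support = 2 * Multiset.card σ.cycleType := by
    rw [← sum_cycleType, Multiset.eq_replicate_card.2 h2]
    simp [mul_comm]
  rw [← Finset.card_eq_iff_eq_univ, hsum, hk]
  omega

lemma card_isFixedPointFreeInvolution_mul_eq_factorial {k : ℕ} (hk : Fintype.card α = 2 * k) :
    #{σ : Perm α | σ.IsFixedPointFreeInvolution} * (k ! * 2 ^ k) = (2 * k)! := by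
  have hcount :
      ∏ m ∈ (Multiset.replicate k 2).toFinset, ((Multiset.replicate k 2).count m)! = k ! := by
    rcases k with _ | k
    · simp
    · rw [Multiset.toFinset_replicate, if_neg k.succ_ne_zero, prod_singleton,
        Multiset.count_replicate_self]
  have := card_of_cycleType_mul_eq α (Multiset.replicate k 2)
  simp_rw [cycleType_eq_replicate_two_iff hk, hcount] at this
  simpa [hk, mul_comm, mul_left_comm, Multiset.mem_replicate] using this

lemma IsFixedPointFreeInvolution.sign_eq {σ : Perm α} (hσ : σ.IsFixedPointFreeInvolution) :
    sign σ = (-1) ^ (Fintype.card α / 2) := by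
  obtain ⟨k, hk⟩ := hσ.two_dvd_card
  rw [sign_of_cycleType, (cycleType_eq_replicate_two_iff hk).2 hσ, hk]
  simp [pow_add, pow_mul]

theorem sum_sign_isFixedPointFreeInvolution :
    ∑ σ : Perm α with σ.IsFixedPointFreeInvolution, ((sign σ : ℤ) : ℂ) =
      if Odd (Fintype.card α) then 0
      else (-1 : ℂ) ^ (Fintype.card α / 2) * (Fintype.card α)! /
        ((Fintype.card α / 2)! * 2 ^ (Fintype.card α / 2)) := by
  split_ifs with hodd
  · refine sum_eq_zero fun σ hσ => absurd (mem_filter.1 hσ).2.two_dvd_card ?_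
    rwa [← even_iff_two_dvd, Nat.not_even_iff_odd]
  obtain ⟨k, hk⟩ := (Nat.not_odd_iff_even.1 hodd).two_dvd
  have hcard : (#{σ : Perm α | σ.IsFixedPointFreeInvolution} : ℂ) * (k ! * 2 ^ k) = (2 * k)! := by
    exact_mod_cast card_isFixedPointFreeInvolution_mul_eq_factorial hk
  rw [sum_congr rfl fun σ hσ => by rw [(mem_filter.1 hσ).2.sign_eq], sum_const, hk,
    Nat.mul_div_cancel_left k two_pos, eq_div_iff (by simp [Nat.factorial_ne_zero]), ← hcard]
  push_cast
  ring

end Equiv.Perm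

lemma prod_comp_eq_prod_fiberwise {Ω ι κ 𝓧 M : Type*} [CommMonoid M] [Fintype ι] [Fintype κ]
    [DecidableEq κ] {Y : κ → Ω → 𝓧} {h : ι → 𝓧 → M} (g : ι → κ) :
    (fun ω => ∏ i, h i (Y (g i) ω)) = fun ω => ∏ k, ∏ i with g i = k, h i (Y k ω) := by
  funext ω
  rw [← prod_fiberwise univ g]
  exact prod_congr rfl fun k _ => prod_congr rfl fun i hi => by rw [(mem_filter.1 hi).2]

namespace ProbabilityTheory
variable {Ω 𝕜 : Type*} [RCLike 𝕜] [MeasurableSpace Ω] {μ : Measure Ω}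

lemma iIndepFun.integrable_fun_prod {ι : Type*} [Fintype ι] {X : ι → Ω → 𝕜}
    (hX : iIndepFun X μ) (hXm : ∀ i, Measurable (X i)) (hXi : ∀ i, Integrable (X i) μ) :
    Integrable (fun ω => ∏ i, X i ω) μ := by
  refine ⟨Finset.aestronglyMeasurable_fun_prod _ fun i _ => (hXm i).aestronglyMeasurable, ?_⟩
  have hlint : ∫⁻ ω, ∏ i, ‖X i ω‖ₑ ∂μ = ∏ i, ∫⁻ ω, ‖X i ω‖ₑ ∂μ :=
    lintegral_prod_eq_prod_lintegral_of_indepFun _ _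
      (hX.comp (fun _ => (‖·‖ₑ)) fun _ => measurable_enorm) fun i => (hXm i).enorm
  have hnorm : ∀ ω, ‖∏ i, X i ω‖ₑ = ∏ i, ‖X i ω‖ₑ := fun ω => by
    simp only [enorm, nnnorm_prod, ENNReal.ofNNReal_finsetProd]
  simp_rw [HasFiniteIntegral, hnorm, hlint]
  exact ENNReal.prod_lt_top fun i _ => (hXi i).2

variable {κ ι 𝓧 : Type*} [Fintype κ] [DecidableEq κ] [Fintype ι] [MeasurableSpace 𝓧]
  {Y : κ → Ω → 𝓧} {h : ι → 𝓧 → 𝕜}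

lemma iIndepFun.integral_prod_comp_eq_prod_fiberwise (hY : iIndepFun Y μ)
    (hYm : ∀ k, Measurable (Y k)) (g : ι → κ) (hh : ∀ i, Measurable (h i)) :
    ∫ ω, ∏ i, h i (Y (g i) ω) ∂μ = ∏ k, ∫ ω, ∏ i with g i = k, h i (Y k ω) ∂μ := by
  rw [prod_comp_eq_prod_fiberwise g]
  exact hY.integral_fun_prod_comp (fun k => (hYm k).aemeasurable)
    fun k => (Finset.measurable_prod _ fun i _ => hh i).aestronglyMeasurable

lemma iIndepFun.integrable_prod_comp_of_fiberwise (hY : iIndepFun Y μ)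
    (hYm : ∀ k, Measurable (Y k)) (g : ι → κ) (hh : ∀ i, Measurable (h i))
    (hint : ∀ k, Integrable (fun ω => ∏ i with g i = k, h i (Y k ω)) μ) :
    Integrable (fun ω => ∏ i, h i (Y (g i) ω)) μ := by
  have hfm : ∀ k, Measurable fun x => ∏ i with g i = k, h i x :=
    fun k => Finset.measurable_prod _ fun i _ => hh i
  rw [prod_comp_eq_prod_fiberwise g]
  exact iIndepFun.integrable_fun_prod (hY.comp _ hfm) (fun k => (hfm k).comp (hYm k)) hint

end ProbabilityTheory

section Wigner
variable {α : Type*} [LinearOrder α]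

-- The factor `M (σ i) i` of a determinant term is `entryFactor σ i` applied to the upper-triangular
-- entry at position `entryPair σ i`, when `M` is Hermitian (`apply_eq_entryFactor`).
def entryPair (σ : Equiv.Perm α) (i : α) : {p : α × α // p.1 ≤ p.2} :=
  Sym2.sortEquiv s(σ i, i)

def entryFactor (σ : Equiv.Perm α) (i : α) (z : ℂ) : ℂ :=
  if σ i ≤ i then z else (starRingEnd ℂ) z

lemma continuous_entryFactor (σ : Equiv.Perm α) (i : α) : Continuous (entryFactor σ i) := by
  unfold entryFactor
  split_ifs
  · exact continuous_id
  · exact Complex.continuous_conj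

lemma norm_entryFactor (σ : Equiv.Perm α) (i : α) (z : ℂ) : ‖entryFactor σ i z‖ = ‖z‖ := by
  unfold entryFactor
  split_ifs <;> simp

lemma apply_eq_entryFactor {M : α → α → ℂ} (hM : ∀ i j, M j i = starRingEnd ℂ (M i j))
    (σ : Equiv.Perm α) (i : α) :
    M (σ i) i = entryFactor σ i (M (entryPair σ i).1.1 (entryPair σ i).1.2) := by
  unfold entryFactor entryPair
  split_ifs with h
  · simp [h]
  · simp [le_of_not_ge h, hM i (σ i)]

lemma filter_entryPair_eq [Fintype α] (σ : Equiv.Perm α) (i : α) :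
    ({j | entryPair σ j = entryPair σ i} : Finset α) = if σ (σ i) = i then {i, σ i} else {i} := by
  ext j
  simp only [entryPair, Sym2.sortEquiv.apply_eq_iff_eq, Sym2.eq_iff, mem_filter, mem_univ, true_and]
  split_ifs with h
  · simp only [mem_insert, mem_singleton]
    constructor
    · rintro (⟨-, rfl⟩ | ⟨-, rfl⟩) <;> simp
    · rintro (rfl | rfl) <;> simp [h]
  · simp only [mem_singleton]
    constructor
    · rintro (⟨-, rfl⟩ | ⟨hj, rfl⟩)
      · rfl
      · exact absurd hj h
    · rintro rfl; simp

lemma card_filter_entryPair_le [Fintype α] (σ : Equiv.Perm α) (k : {p : α × α // p.1 ≤ p.2}) :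
    #{j | entryPair σ j = k} ≤ 2 := by
  by_cases hk : ∃ i, entryPair σ i = k
  · obtain ⟨i, rfl⟩ := hk
    rw [filter_entryPair_eq]
    split_ifs
    · exact card_le_two
    · simp
  · simp [filter_false_of_mem fun j _ hj => hk ⟨j, hj⟩]

lemma entryPair_fst_lt_snd {σ : Equiv.Perm α} {i : α} (hi : σ i ≠ i) :
    (entryPair σ i).1.1 < (entryPair σ i).1.2 := by
  simpa [entryPair] using hi.symm

lemma entryFactor_mul_entryFactor_apply {σ : Equiv.Perm α} {i : α} (hinv : σ (σ i) = i)
    (hi : σ i ≠ i) (z : ℂ) :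
    entryFactor σ i z * entryFactor σ (σ i) z = ((‖z‖ ^ 2 : ℝ) : ℂ) := by
  unfold entryFactor
  rw [hinv]
  rcases lt_or_gt_of_ne hi with h | h
  · rw [if_pos h.le, if_neg (not_le.2 h), Complex.mul_conj, Complex.normSq_eq_norm_sq]
  · rw [if_neg (not_le.2 h), if_pos h.le, mul_comm, Complex.mul_conj, Complex.normSq_eq_norm_sq]

lemma prod_apply_eq_prod_entryFactor [Fintype α] {M : α → α → ℂ}
    (hM : ∀ i j, M j i = starRingEnd ℂ (M i j)) (σ : Equiv.Perm α) :
    ∏ i, M (σ i) i = ∏ i, entryFactor σ i (M (entryPair σ i).1.1 (entryPair σ i).1.2) :=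
  prod_congr rfl fun i _ => apply_eq_entryFactor hM σ i

variable {Ω : Type*} [MeasurableSpace Ω] {μ : Measure Ω} {ζ : α → α → Ω → ℂ}

lemma integrable_prod_entryFactor_fiber [Fintype α] [IsFiniteMeasure μ]
    (hL2 : ∀ i j, MemLp (ζ i j) 2 μ) (σ : Equiv.Perm α) (k : {p : α × α // p.1 ≤ p.2}) :
    Integrable (fun ω => ∏ i with entryPair σ i = k, entryFactor σ i (ζ k.1.1 k.1.2 ω)) μ := by
  have hL : MemLp (ζ k.1.1 k.1.2) (#{i | entryPair σ i = k} : ℕ) μ :=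
    (hL2 _ _).mono_exponent (by exact_mod_cast card_filter_entryPair_le σ k)
  refine hL.integrable_norm_pow'.mono' ?_ (ae_of_all _ fun ω => ?_)
  · exact (continuous_finsetProd _ fun i _ => continuous_entryFactor σ i).comp_aestronglyMeasurable
      (hL2 _ _).1
  · simp [norm_prod, norm_entryFactor]

lemma integral_prod_entryFactor_fiber_eq_one [Fintype α] [IsProbabilityMeasure μ]
    (hvar : ∀ i j, i < j → ∫ ω, ‖ζ i j ω‖ ^ 2 ∂μ = 1) {σ : Equiv.Perm α}
    (hσ : σ.IsFixedPointFreeInvolution) (k : {p : α × α // p.1 ≤ p.2}) :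
    ∫ ω, ∏ i with entryPair σ i = k, entryFactor σ i (ζ k.1.1 k.1.2 ω) ∂μ = 1 := by
  by_cases hk : ∃ i, entryPair σ i = k
  · obtain ⟨i, rfl⟩ := hk
    obtain ⟨hinv, hi⟩ := hσ i
    simp_rw [filter_entryPair_eq, if_pos hinv, prod_pair (Ne.symm hi),
      entryFactor_mul_entryFactor_apply hinv hi]
    rw [integral_complex_ofReal, hvar _ _ (entryPair_fst_lt_snd hi), Complex.ofReal_one]
  · simp [filter_false_of_mem fun j _ hj => hk ⟨j, hj⟩]

lemma integral_prod_entryFactor_fiber_eq_zero [Fintype α]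
    (hmean : ∀ i j, i ≤ j → ∫ ω, ζ i j ω ∂μ = 0) {σ : Equiv.Perm α} {i : α}
    (hi : ¬(σ (σ i) = i ∧ σ i ≠ i)) :
    ∫ ω, ∏ j with entryPair σ j = entryPair σ i,
      entryFactor σ j (ζ (entryPair σ i).1.1 (entryPair σ i).1.2 ω) ∂μ = 0 := by
  have hfiber : ({j | entryPair σ j = entryPair σ i} : Finset α) = {i} := by
    rw [filter_entryPair_eq]
    split_ifs with hinv
    · rw [not_not.1 (not_and.1 hi hinv), pair_eq_singleton]
    · rfl
  rw [hfiber]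
  simp only [prod_singleton, entryFactor]
  split_ifs
  · exact hmean _ _ (entryPair σ i).2
  · rw [integral_conj, hmean _ _ (entryPair σ i).2, map_zero]

variable [Fintype α] [IsProbabilityMeasure μ]
  (hmeas : ∀ i j, Measurable (ζ i j))
  (hherm : ∀ i j ω, ζ j i ω = starRingEnd ℂ (ζ i j ω))
  (hindep : iIndepFun (fun p : {p : α × α // p.1 ≤ p.2} => ζ p.1.1 p.1.2) μ)
include hmeas hherm hindep

lemma integrable_prod_apply_perm (hL2 : ∀ i j, MemLp (ζ i j) 2 μ) (σ : Equiv.Perm α) :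
    Integrable (fun ω => ∏ i, ζ (σ i) i ω) μ := by
  simp_rw [prod_apply_eq_prod_entryFactor (fun i j => hherm i j _) σ]
  exact hindep.integrable_prod_comp_of_fiberwise (fun k => hmeas _ _) (entryPair σ)
    (fun i => (continuous_entryFactor σ i).measurable) (integrable_prod_entryFactor_fiber hL2 σ)

lemma integral_prod_apply_perm (hmean : ∀ i j, i ≤ j → ∫ ω, ζ i j ω ∂μ = 0)
    (hvar : ∀ i j, i < j → ∫ ω, ‖ζ i j ω‖ ^ 2 ∂μ = 1) (σ : Equiv.Perm α) :
    ∫ ω, ∏ i, ζ (σ i) i ω ∂μ = if σ.IsFixedPointFreeInvolution then 1 else 0 := by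
  simp_rw [prod_apply_eq_prod_entryFactor (fun i j => hherm i j _) σ]
  rw [hindep.integral_prod_comp_eq_prod_fiberwise (fun k => hmeas _ _) (entryPair σ)
    (fun i => (continuous_entryFactor σ i).measurable)]
  split_ifs with hσ
  · exact prod_eq_one fun k _ => integral_prod_entryFactor_fiber_eq_one hvar hσ k
  · obtain ⟨i, hi⟩ := not_forall.1 hσ
    exact prod_eq_zero (mem_univ (entryPair σ i)) (integral_prod_entryFactor_fiber_eq_zero hmean hi)

end Wigner

theorem expected_det_wigner_general
    {Ω : Type*} [MeasurableSpace Ω] (μ : Measure Ω) [IsProbabilityMeasure μ]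
    (n : ℕ) (ζ : Fin n → Fin n → Ω → ℂ)
    (hmeas : ∀ i j, Measurable (ζ i j))
    (hherm : ∀ i j ω, ζ j i ω = starRingEnd ℂ (ζ i j ω))
    (hindep : iIndepFun
      (fun p : {p : Fin n × Fin n // p.1 ≤ p.2} => ζ p.1.1 p.1.2) μ)
    (hmean : ∀ i j, i ≤ j → ∫ ω, ζ i j ω ∂μ = 0)
    (hvar : ∀ i j, i < j → ∫ ω, ‖ζ i j ω‖ ^ 2 ∂μ = 1)
    (hL2 : ∀ i j, MemLp (ζ i j) 2 μ) :
    ∫ ω, Matrix.det (Matrix.of fun i j => ζ i j ω) ∂μ =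
      if Odd n then 0
      else (-1 : ℂ) ^ (n / 2) * (Nat.factorial n : ℂ) / ((Nat.factorial (n / 2) : ℂ) * 2 ^ (n / 2)) := by
  have hdet : ∀ ω, (Matrix.of fun i j => ζ i j ω).det =
      ∑ σ : Equiv.Perm (Fin n), ((Equiv.Perm.sign σ : ℤ) : ℂ) * ∏ i, ζ (σ i) i ω := fun ω => by
    simp [Matrix.det_apply, Units.smul_def]
  calc ∫ ω, (Matrix.of fun i j => ζ i j ω).det ∂μ
      = ∑ σ : Equiv.Perm (Fin n), ((Equiv.Perm.sign σ : ℤ) : ℂ) * ∫ ω, ∏ i, ζ (σ i) i ω ∂μ := by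
        simp_rw [hdet]
        rw [integral_finsetSum _ fun σ _ =>
          (integrable_prod_apply_perm hmeas hherm hindep hL2 σ).const_mul _]
        simp_rw [integral_const_mul]
    _ = ∑ σ : Equiv.Perm (Fin n) with σ.IsFixedPointFreeInvolution,
          ((Equiv.Perm.sign σ : ℤ) : ℂ) := by
        simp_rw [integral_prod_apply_perm hmeas hherm hindep hmean hvar, mul_ite, mul_one, mul_zero,
          sum_ite, sum_const_zero, add_zero]
    _ = _ := by
        rw [Equiv.Perm.sum_sign_isFixedPointFreeInvolution, Fintype.card_fin]

/-- First moment of the determinant of a Wigner Hermitian matrix: it vanishes for odd `n`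
and equals `(-1)^(n/2) n! / ((n/2)! 2^(n/2))` for even `n`. -/
theorem expected_det_wigner
    {Ω : Type*} [MeasurableSpace Ω] (μ : Measure Ω) [IsProbabilityMeasure μ]
    (n : ℕ) (ζ : Fin n → Fin n → Ω → ℂ)
    (hmeas : ∀ i j, Measurable (ζ i j))
    (hherm : ∀ i j ω, ζ j i ω = starRingEnd ℂ (ζ i j ω))
    (hdiag : ∀ i ω, (ζ i i ω).im = 0)
    (hindep : iIndepFun
      (fun p : {p : Fin n × Fin n // p.1 ≤ p.2} => ζ p.1.1 p.1.2) μ)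
    (hmean : ∀ i j, i ≤ j → ∫ ω, ζ i j ω ∂μ = 0)
    (hvar : ∀ i j, i < j → ∫ ω, ‖ζ i j ω‖ ^ 2 ∂μ = 1)
    (hL2 : ∀ i j, MemLp (ζ i j) 2 μ) :
    ∫ ω, Matrix.det (Matrix.of fun i j => ζ i j ω) ∂μ =
      if Odd n then 0
      else (-1 : ℂ) ^ (n / 2) * (Nat.factorial n : ℂ) / ((Nat.factorial (n / 2) : ℂ) * 2 ^ (n / 2)) :=
  expected_det_wigner_general μ n ζ hmeas hherm hindep hmean hvar hL2
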